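/- For every fixed τ, the function F(τ,·) arising as the inhomogeneous term of the integral equation takes values in [0,1]: for all τ < T and all ξ ∈ [0,∞)², one has 0 ≤ F(τ,ξ) = ∫_{[0,∞)²} K(T,x;τ,ξ) dx ≤ exp(−λ(T−τ)) ≤ 1. -/

import Mathlib

/-!
The kernel factors as `exp (-λ (T - τ))` times a product of two one-dimensional kernels. Each of
these is the method-of-images density on `[0, ∞)` of a Brownian motion with drift killed at `0`:
it is nonnegative there when `ξ ≥ 0`, and dropping the image term leaves, after completing the
square, the Gaussian density of mean `ξ + C s` and variance `σ² s`. Hence its integral over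
`[0, ∞)` lies in `[0, 1]`, and `F(τ, ξ)` lies in `[0, exp (-λ (T - τ))]`.
-/

open Real MeasureTheory

/-- The kernel `K(t,x;τ,ξ)` from Theorem 3 of the paper. -/
noncomputable def Kker (C₁ C₂ σ₁ σ₂ lam : ℝ) (t : ℝ) (x : ℝ × ℝ) (τ : ℝ) (ξ : ℝ × ℝ) : ℝ :=
  Real.exp ((-(lam + C₁ ^ 2 / (2 * σ₁ ^ 2) + C₂ ^ 2 / (2 * σ₂ ^ 2))) * (t - τ)
      + (C₁ / σ₁ ^ 2) * (x.1 - ξ.1) + (C₂ / σ₂ ^ 2) * (x.2 - ξ.2))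
    * ((Real.sqrt (2 * Real.pi * σ₁ ^ 2 * (t - τ)))⁻¹
        * (Real.exp (-(x.1 - ξ.1) ^ 2 / (2 * σ₁ ^ 2 * (t - τ)))
            - Real.exp (-(x.1 + ξ.1) ^ 2 / (2 * σ₁ ^ 2 * (t - τ)))))
    * ((Real.sqrt (2 * Real.pi * σ₂ ^ 2 * (t - τ)))⁻¹
        * (Real.exp (-(x.2 - ξ.2) ^ 2 / (2 * σ₂ ^ 2 * (t - τ)))
            - Real.exp (-(x.2 + ξ.2) ^ 2 / (2 * σ₂ ^ 2 * (t - τ)))))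

/-- The inhomogeneous term `F(τ,ξ) = ∫_{[0,∞)²} K(T,x;τ,ξ) dx` of the integral equation. -/
noncomputable def Fker (C₁ C₂ σ₁ σ₂ lam T : ℝ) (τ : ℝ) (ξ : ℝ × ℝ) : ℝ :=
  ∫ x in Set.Ici (0 : ℝ) ×ˢ Set.Ici (0 : ℝ), Kker C₁ C₂ σ₁ σ₂ lam T x τ ξ

open ProbabilityTheory Set

noncomputable def killedDriftKernel (C σ s ξ x : ℝ) : ℝ :=
  exp (C / σ ^ 2 * (x - ξ) - C ^ 2 / (2 * σ ^ 2) * s) *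
    ((√(2 * π * σ ^ 2 * s))⁻¹ *
      (exp (-(x - ξ) ^ 2 / (2 * σ ^ 2 * s)) - exp (-(x + ξ) ^ 2 / (2 * σ ^ 2 * s))))

lemma Kker_eq_exp_mul_killedDriftKernel (C₁ C₂ σ₁ σ₂ lam t τ : ℝ) (x ξ : ℝ × ℝ) :
    Kker C₁ C₂ σ₁ σ₂ lam t x τ ξ = exp (-lam * (t - τ)) *
      (killedDriftKernel C₁ σ₁ (t - τ) ξ.1 x.1 * killedDriftKernel C₂ σ₂ (t - τ) ξ.2 x.2) := by
  have hsplit : -(lam + C₁ ^ 2 / (2 * σ₁ ^ 2) + C₂ ^ 2 / (2 * σ₂ ^ 2)) * (t - τ)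
      + C₁ / σ₁ ^ 2 * (x.1 - ξ.1) + C₂ / σ₂ ^ 2 * (x.2 - ξ.2)
      = -lam * (t - τ) + (C₁ / σ₁ ^ 2 * (x.1 - ξ.1) - C₁ ^ 2 / (2 * σ₁ ^ 2) * (t - τ))
        + (C₂ / σ₂ ^ 2 * (x.2 - ξ.2) - C₂ ^ 2 / (2 * σ₂ ^ 2) * (t - τ)) := by ring
  rw [Kker, killedDriftKernel, killedDriftKernel, hsplit, exp_add, exp_add]
  ring

lemma Fker_eq_exp_mul_setIntegral_mul_setIntegral (C₁ C₂ σ₁ σ₂ lam T τ : ℝ) (ξ : ℝ × ℝ) :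
    Fker C₁ C₂ σ₁ σ₂ lam T τ ξ = exp (-lam * (T - τ)) *
      ((∫ x in Ici 0, killedDriftKernel C₁ σ₁ (T - τ) ξ.1 x) *
        ∫ x in Ici 0, killedDriftKernel C₂ σ₂ (T - τ) ξ.2 x) := by
  simp only [Fker, Kker_eq_exp_mul_killedDriftKernel, integral_const_mul, Measure.volume_eq_prod,
    setIntegral_prod_mul]

lemma killedDriftKernel_nonneg (C σ : ℝ) {s ξ x : ℝ} (hs : 0 ≤ s) (hξ : 0 ≤ ξ) (hx : 0 ≤ x) :
    0 ≤ killedDriftKernel C σ s ξ x := by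
  have himage : exp (-(x + ξ) ^ 2 / (2 * σ ^ 2 * s)) ≤ exp (-(x - ξ) ^ 2 / (2 * σ ^ 2 * s)) :=
    exp_le_exp.2 <| div_le_div_of_nonneg_right (by nlinarith) (by positivity)
  unfold killedDriftKernel
  have := sub_nonneg.2 himage
  positivity

lemma exp_mul_gaussianPDFReal_eq_gaussianPDFReal_add {σ s : ℝ} (hσ : σ ≠ 0) (hs : 0 < s)
    (C ξ x : ℝ) :
    exp (C / σ ^ 2 * (x - ξ) - C ^ 2 / (2 * σ ^ 2) * s) * gaussianPDFReal ξ (σ ^ 2 * s).toNNReal x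
      = gaussianPDFReal (ξ + C * s) (σ ^ 2 * s).toNNReal x := by
  have hsquare : C / σ ^ 2 * (x - ξ) - C ^ 2 / (2 * σ ^ 2) * s + -(x - ξ) ^ 2 / (2 * (σ ^ 2 * s))
      = -(x - (ξ + C * s)) ^ 2 / (2 * (σ ^ 2 * s)) := by
    field_simp
    ring
  rw [gaussianPDFReal, gaussianPDFReal, coe_toNNReal _ (by positivity), mul_left_comm, ← exp_add,
    hsquare]

lemma killedDriftKernel_le_gaussianPDFReal (C : ℝ) {σ s : ℝ} (hσ : σ ≠ 0) (hs : 0 < s)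
    (ξ x : ℝ) :
    killedDriftKernel C σ s ξ x ≤ gaussianPDFReal (ξ + C * s) (σ ^ 2 * s).toNNReal x := by
  rw [← exp_mul_gaussianPDFReal_eq_gaussianPDFReal_add hσ hs, gaussianPDFReal,
    coe_toNNReal _ (by positivity), killedDriftKernel, mul_assoc (2 * π), mul_assoc 2 (σ ^ 2)]
  gcongr
  exact sub_le_self _ (exp_pos _).le

lemma setIntegral_Ici_killedDriftKernel_mem_Icc (C : ℝ) {σ s ξ : ℝ} (hσ : σ ≠ 0) (hs : 0 < s)
    (hξ : 0 ≤ ξ) : ∫ x in Ici 0, killedDriftKernel C σ s ξ x ∈ Icc 0 1 := by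
  have hnonneg : 0 ≤ᵐ[volume.restrict (Ici 0)] killedDriftKernel C σ s ξ :=
    ae_restrict_of_forall_mem measurableSet_Ici fun x hx ↦ killedDriftKernel_nonneg C σ hs.le hξ hx
  have hvar : (σ ^ 2 * s).toNNReal ≠ 0 := by
    simp only [ne_eq, toNNReal_eq_zero, not_le]
    positivity
  refine ⟨integral_nonneg_of_ae hnonneg, ?_⟩
  calc ∫ x in Ici 0, killedDriftKernel C σ s ξ x
      ≤ ∫ x in Ici 0, gaussianPDFReal (ξ + C * s) (σ ^ 2 * s).toNNReal x :=
        integral_mono_of_nonneg hnonneg (integrable_gaussianPDFReal _ _).integrableOn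
          (ae_of_all _ (killedDriftKernel_le_gaussianPDFReal C hσ hs ξ))
    _ ≤ ∫ x, gaussianPDFReal (ξ + C * s) (σ ^ 2 * s).toNNReal x :=
        setIntegral_le_integral (integrable_gaussianPDFReal _ _)
          (ae_of_all _ (gaussianPDFReal_nonneg _ _))
    _ = 1 := integral_gaussianPDFReal_eq_one _ hvar

/-- For all `τ < T` and `ξ ∈ [0,∞)²`, the inhomogeneous term satisfies
`0 ≤ F(τ,ξ) ≤ exp(−λ(T−τ)) ≤ 1`. -/
theorem Fker_mem_unit_interval
    (C₁ C₂ σ₁ σ₂ lam : ℝ) (hσ₁ : 0 < σ₁) (hσ₂ : 0 < σ₂) (hlam : 0 ≤ lam)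
    (T τ : ℝ) (hτT : τ < T) (ξ : ℝ × ℝ) (hξ : ξ ∈ Set.Ici (0 : ℝ) ×ˢ Set.Ici (0 : ℝ)) :
    0 ≤ Fker C₁ C₂ σ₁ σ₂ lam T τ ξ ∧
    Fker C₁ C₂ σ₁ σ₂ lam T τ ξ ≤ Real.exp (-lam * (T - τ)) ∧
    Real.exp (-lam * (T - τ)) ≤ 1 := by
  have hs : 0 < T - τ := sub_pos.2 hτT
  obtain ⟨hI₁_nonneg, hI₁_le⟩ := setIntegral_Ici_killedDriftKernel_mem_Icc C₁ hσ₁.ne' hs hξ.1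
  obtain ⟨hI₂_nonneg, hI₂_le⟩ := setIntegral_Ici_killedDriftKernel_mem_Icc C₂ hσ₂.ne' hs hξ.2
  have hprod : (∫ x in Ici 0, killedDriftKernel C₁ σ₁ (T - τ) ξ.1 x) *
      (∫ x in Ici 0, killedDriftKernel C₂ σ₂ (T - τ) ξ.2 x) ≤ 1 :=
    mul_le_one₀ hI₁_le hI₂_nonneg hI₂_le
  rw [Fker_eq_exp_mul_setIntegral_mul_setIntegral]
  refine ⟨by positivity, mul_le_of_le_one_right (exp_pos _).le hprod, ?_⟩
  exact exp_le_one_iff.2 (by nlinarith)
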